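/- Let f̄ : ℝ^p → ℝ be μ-strongly convex and L-smooth with global minimizer x⋆, let 0 < α ≤ 2/(μ+L), let γ = μL/(μ+L), and let ψ > 0. Fix x̄ ∈ ℝ^p and a vector h ∈ ℝ^p, and set h̄ = ∇f̄(x̄). Let ḡ : Ω → ℝ^p be a random vector on a probability space with 𝔼[ḡ] = h and 𝔼[‖ḡ − h‖²] ≤ σ²/n for some σ > 0 and integer n ≥ 1, with ḡ and ‖ḡ‖² integrable. Then 𝔼[‖x̄ − α ḡ − x⋆‖²] ≤ (1+ψ)(1 − 2αγ)‖x̄ − x⋆‖² + α²(1 + ψ^{-1})‖h̄ − h‖² + α²σ²/n. -/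

import Mathlib

/-! Strong convexity and `L`-smoothness give the coercivity inequality
`μL‖x - y‖² + ‖∇f x - ∇f y‖² ≤ (μ + L)⟪∇f x - ∇f y, x - y⟫`, via cocoercivity of the
gradient of the convex function `f - μ/2‖·‖²`. At `y = x⋆`, where `∇f x⋆ = 0`, it makes the
exact gradient step a contraction: `‖x̄ - x⋆ - α∇f x̄‖² ≤ (1 - 2αγ)‖x̄ - x⋆‖²`. Young's
inequality `‖a + b‖² ≤ (1 + ψ)‖a‖² + (1 + ψ⁻¹)‖b‖²` pays for replacing `∇f x̄` by `h`, and
expanding `𝔼‖x̄ - x⋆ - αḡ‖²` around the mean `x̄ - x⋆ - αh` adds the variance term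
`α²𝔼‖ḡ - h‖² ≤ α²σ²/n`. -/

open MeasureTheory

/-- `f` is `μ`-strongly convex: `x ↦ f x - (μ/2)‖x‖²` is convex on all of `ℝ^p`. -/
def StronglyConvex {p : ℕ} (μ : ℝ) (f : EuclideanSpace ℝ (Fin p) → ℝ) : Prop :=
  ConvexOn ℝ Set.univ (fun x => f x - μ / 2 * ‖x‖ ^ 2)

/-- `f` is `L`-smooth: `f` is differentiable and its gradient is `L`-Lipschitz. -/
def LSmooth {p : ℕ} (L : ℝ) (f : EuclideanSpace ℝ (Fin p) → ℝ) : Prop :=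
  Differentiable ℝ f ∧ ∀ x y, ‖gradient f x - gradient f y‖ ≤ L * ‖x - y‖

open Set
open scoped RealInnerProductSpace

section FirstOrder

variable {E : Type*} [NormedAddCommGroup E] [InnerProductSpace ℝ E] [CompleteSpace E]
  {f : E → ℝ} {f' : E} {g : E → E}

theorem HasGradientAt.hasDerivAt_comp_add_smul {x d : E} {t : ℝ}
    (hf : HasGradientAt f f' (x + t • d)) :
    HasDerivAt (fun s : ℝ => f (x + s • d)) ⟪f', d⟫ t := by
  have hline : HasDerivAt (fun s : ℝ => x + s • d) d t := by
    simpa using ((hasDerivAt_id t).smul_const d).const_add x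
  have := (hasGradientAt_iff_hasFDerivAt.1 hf).comp_hasDerivAt t hline
  rwa [InnerProductSpace.toDual_apply_apply] at this

theorem HasGradientAt.sub_inner_const {x : E} (hf : HasGradientAt f f' x) (a : E) :
    HasGradientAt (fun z => f z - ⟪a, z⟫) (f' - a) x := by
  rw [hasGradientAt_iff_hasFDerivAt] at hf ⊢
  rw [map_sub]
  exact hf.sub (innerSL ℝ a).hasFDerivAt

theorem HasGradientAt.sub_half_mul_norm_sq {x : E} (hf : HasGradientAt f f' x) (μ : ℝ) :
    HasGradientAt (fun z => f z - μ / 2 * ‖z‖ ^ 2) (f' - μ • x) x := by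
  rw [hasGradientAt_iff_hasFDerivAt] at hf ⊢
  refine (hf.sub ((hasStrictFDerivAt_norm_sq x).hasFDerivAt.const_mul (μ / 2))).congr_fderiv ?_
  ext w
  simp only [sub_apply, InnerProductSpace.toDual_apply_apply, smul_apply, coe_innerSL_apply,
    nsmul_eq_mul, Nat.cast_ofNat, smul_eq_mul, map_sub, map_smul, sub_right_inj]
  ring

theorem IsLocalMin.hasGradientAt_eq_zero {x : E} (hmin : IsLocalMin f x)
    (hf : HasGradientAt f f' x) : f' = 0 :=
  (InnerProductSpace.toDual ℝ E).map_eq_zero_iff.1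
    (hmin.hasFDerivAt_eq_zero (hasGradientAt_iff_hasFDerivAt.1 hf))

theorem ConvexOn.add_inner_le_of_hasGradientAt (hf : ConvexOn ℝ univ f) {x : E}
    (hx : HasGradientAt f f' x) (y : E) : f x + ⟪f', y - x⟫ ≤ f y := by
  have hline : ConvexOn ℝ univ (fun t : ℝ => f (x + t • (y - x))) := by
    simpa [Function.comp_def, AffineMap.lineMap_apply, add_comm]
      using hf.comp_affineMap (AffineMap.lineMap x y)
  have hslope := hline.le_slope_of_hasDerivAt (mem_univ 0) (mem_univ 1) one_pos
    (HasGradientAt.hasDerivAt_comp_add_smul (t := 0) (by simpa using hx))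
  simp only [slope_def_field, one_smul, zero_smul, add_zero, add_sub_cancel, sub_zero,
    div_one] at hslope
  linarith

theorem ConvexOn.inner_sub_nonneg_of_hasGradientAt (hf : ConvexOn ℝ univ f)
    (hg : ∀ z, HasGradientAt f (g z) z) (x y : E) : 0 ≤ ⟪g x - g y, x - y⟫ := by
  have hxy := hf.add_inner_le_of_hasGradientAt (hg x) y
  have hyx := hf.add_inner_le_of_hasGradientAt (hg y) x
  rw [← neg_sub x y, inner_neg_right] at hxy
  rw [inner_sub_left]
  linarith

theorem ConvexOn.mul_sq_norm_sub_le_inner {μ : ℝ}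
    (hf : ConvexOn ℝ univ (fun z => f z - μ / 2 * ‖z‖ ^ 2))
    (hg : ∀ z, HasGradientAt f (g z) z) (x y : E) :
    μ * ‖x - y‖ ^ 2 ≤ ⟪g x - g y, x - y⟫ := by
  have := hf.inner_sub_nonneg_of_hasGradientAt (fun z => (hg z).sub_half_mul_norm_sq μ) x y
  rw [sub_sub_sub_comm, ← smul_sub, inner_sub_left, real_inner_smul_left,
    real_inner_self_eq_norm_sq] at this
  linarith

theorem le_add_inner_add_sq_of_inner_sub_le {c : ℝ} (hg : ∀ z, HasGradientAt f (g z) z)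
    (hc : ∀ x y, ⟪g x - g y, x - y⟫ ≤ c * ‖x - y‖ ^ 2) (x y : E) :
    f y ≤ f x + ⟪g x, y - x⟫ + c / 2 * ‖y - x‖ ^ 2 := by
  set d := y - x
  set F : ℝ → ℝ := fun t => f (x + t • d) - t * ⟪g x, d⟫ - c / 2 * ‖d‖ ^ 2 * t ^ 2
  have hF : ∀ t, HasDerivAt F (⟪g (x + t • d), d⟫ - ⟪g x, d⟫ - c * ‖d‖ ^ 2 * t) t := by
    intro t
    refine ((((hg _).hasDerivAt_comp_add_smul).sub ((hasDerivAt_id t).mul_const _)).sub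
      ((hasDerivAt_pow 2 t).const_mul (c / 2 * ‖d‖ ^ 2))).congr_deriv ?_
    ring
  have hanti : AntitoneOn F (Ici 0) := by
    refine antitoneOn_of_hasDerivWithinAt_nonpos (convex_Ici 0)
      (fun t _ => (hF t).continuousAt.continuousWithinAt) (fun t _ => (hF t).hasDerivWithinAt)
      fun t ht => ?_
    rw [interior_Ici, mem_Ioi] at ht
    have hct := hc (x + t • d) x
    rw [add_sub_cancel_left, inner_smul_right, norm_smul, Real.norm_of_nonneg ht.le,
      inner_sub_left] at hct
    nlinarith
  have h01 : F 1 ≤ F 0 := hanti (mem_Ici.2 le_rfl) (mem_Ici.2 zero_le_one) zero_le_one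
  have hF0 : F 0 = f x := by simp [F]
  have hF1 : F 1 = f y - ⟪g x, d⟫ - c / 2 * ‖d‖ ^ 2 := by simp [F, d]
  linarith

theorem ConvexOn.add_inner_add_sq_div_le {c : ℝ} (hf : ConvexOn ℝ univ f)
    (hg : ∀ z, HasGradientAt f (g z) z) (hc0 : 0 < c)
    (hc : ∀ x y, ⟪g x - g y, x - y⟫ ≤ c * ‖x - y‖ ^ 2) (x y : E) :
    f x + ⟪g x, y - x⟫ + ‖g y - g x‖ ^ 2 / (2 * c) ≤ f y := by
  set φ : E → ℝ := fun z => f z - ⟪g x, z⟫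
  have hφ : ConvexOn ℝ univ φ := hf.sub ((innerₛₗ ℝ (g x)).concaveOn convex_univ)
  have hgφ : ∀ z, HasGradientAt φ (g z - g x) z := fun z => (hg z).sub_inner_const (g x)
  have hcφ : ∀ a b, ⟪(g a - g x) - (g b - g x), a - b⟫ ≤ c * ‖a - b‖ ^ 2 := by
    simpa only [sub_sub_sub_cancel_right] using hc
  set G := g y - g x
  have hmin : φ x ≤ φ (y - c⁻¹ • G) := by
    simpa using hφ.add_inner_le_of_hasGradientAt (hgφ x) (y - c⁻¹ • G)
  have hdescent := le_add_inner_add_sq_of_inner_sub_le hgφ hcφ y (y - c⁻¹ • G)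
  rw [sub_sub_cancel_left, inner_neg_right, inner_smul_right, norm_neg, norm_smul,
    real_inner_self_eq_norm_sq, Real.norm_of_nonneg (inv_nonneg.2 hc0.le)] at hdescent
  have hsq : c / 2 * (c⁻¹ * ‖G‖) ^ 2 - c⁻¹ * ‖G‖ ^ 2 = -(‖G‖ ^ 2 / (2 * c)) := by
    field_simp
    ring
  simp only [φ, inner_sub_right] at hmin hdescent ⊢
  linarith

theorem ConvexOn.sq_norm_sub_le_mul_inner {c : ℝ} (hf : ConvexOn ℝ univ f)
    (hg : ∀ z, HasGradientAt f (g z) z) (hc0 : 0 < c)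
    (hc : ∀ x y, ⟪g x - g y, x - y⟫ ≤ c * ‖x - y‖ ^ 2) (x y : E) :
    ‖g x - g y‖ ^ 2 ≤ c * ⟪g x - g y, x - y⟫ := by
  have hxy := hf.add_inner_add_sq_div_le hg hc0 hc x y
  have hyx := hf.add_inner_add_sq_div_le hg hc0 hc y x
  rw [norm_sub_rev] at hxy
  have hsum : ‖g x - g y‖ ^ 2 / c ≤ ⟪g x - g y, x - y⟫ := by
    rw [← neg_sub x y, inner_neg_right] at hxy
    rw [inner_sub_left]
    field_simp at hxy hyx ⊢
    linarith
  rwa [div_le_iff₀' hc0] at hsum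

theorem ConvexOn.mul_mul_sq_add_sq_le_inner {μ L : ℝ}
    (hf : ConvexOn ℝ univ (fun z => f z - μ / 2 * ‖z‖ ^ 2))
    (hg : ∀ z, HasGradientAt f (g z) z) (hL : ∀ x y, ‖g x - g y‖ ≤ L * ‖x - y‖) (x y : E) :
    μ * L * ‖x - y‖ ^ 2 + ‖g x - g y‖ ^ 2 ≤ (μ + L) * ⟪g x - g y, x - y⟫ := by
  have hupper : ∀ a b, ⟪g a - g b, a - b⟫ ≤ L * ‖a - b‖ ^ 2 := fun a b =>
    (real_inner_le_norm _ _).trans <| by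
      nlinarith [mul_le_mul_of_nonneg_right (hL a b) (norm_nonneg (a - b))]
  have hlower := hf.mul_sq_norm_sub_le_inner hg x y
  rcases lt_or_ge μ L with hμL | hLμ
  · -- Nesterov: the gradient of `f - μ/2 ‖·‖²` is `(L - μ)`-cocoercive.
    have hcφ : ∀ a b, ⟪(g a - μ • a) - (g b - μ • b), a - b⟫ ≤ (L - μ) * ‖a - b‖ ^ 2 := by
      intro a b
      rw [sub_sub_sub_comm, ← smul_sub, inner_sub_left, real_inner_smul_left,
        real_inner_self_eq_norm_sq]
      linarith [hupper a b]
    have hco := hf.sq_norm_sub_le_mul_inner (fun z => (hg z).sub_half_mul_norm_sq μ)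
      (sub_pos.2 hμL) hcφ x y
    rw [sub_sub_sub_comm, ← smul_sub] at hco
    have hnorm : ‖g x - g y - μ • (x - y)‖ ^ 2 =
        ‖g x - g y‖ ^ 2 - 2 * μ * ⟪g x - g y, x - y⟫ + μ ^ 2 * ‖x - y‖ ^ 2 := by
      rw [norm_sub_sq_real, inner_smul_right, norm_smul, Real.norm_eq_abs, mul_pow, sq_abs]
      ring
    rw [hnorm, inner_sub_left (g x - g y), real_inner_smul_left, real_inner_self_eq_norm_sq] at hco
    linarith
  · -- `μ‖x - y‖² ≤ ⟪g x - g y, x - y⟫ ≤ L‖x - y‖²` leaves only `x = y` or `L = μ`.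
    obtain rfl | hxy := eq_or_ne x y
    · simp
    have hD : 0 < ‖x - y‖ ^ 2 := by positivity [sub_ne_zero.2 hxy]
    obtain rfl : L = μ := le_antisymm hLμ (le_of_mul_le_mul_right (hlower.trans (hupper x y)) hD)
    have hG : ‖g x - g y‖ ^ 2 ≤ L ^ 2 * ‖x - y‖ ^ 2 := by
      rw [← mul_pow]
      exact pow_le_pow_left₀ (norm_nonneg _) (hL x y) 2
    rw [le_antisymm (hupper x y) hlower]
    linarith

end FirstOrder

section InnerProductSpace

variable {E : Type*} [NormedAddCommGroup E] [InnerProductSpace ℝ E]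

theorem norm_add_sq_le_one_add_mul_add_one_add_inv_mul {ψ : ℝ} (hψ : 0 < ψ) (a b : E) :
    ‖a + b‖ ^ 2 ≤ (1 + ψ) * ‖a‖ ^ 2 + (1 + ψ⁻¹) * ‖b‖ ^ 2 := by
  have hsq : 0 ≤ ‖ψ • a - b‖ ^ 2 := sq_nonneg _
  rw [norm_sub_sq_real, real_inner_smul_left, norm_smul, Real.norm_of_nonneg hψ.le,
    mul_pow] at hsq
  have hinner : ψ * (2 * ⟪a, b⟫) ≤ ψ * (ψ * ‖a‖ ^ 2 + ψ⁻¹ * ‖b‖ ^ 2) := by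
    rw [mul_add, ← mul_assoc, mul_inv_cancel_left₀ hψ.ne']
    linarith
  rw [norm_add_sq_real]
  linarith [le_of_mul_le_mul_left hinner hψ]

theorem norm_sub_smul_sq_le_of_mul_mul_sq_add_sq_le_inner {d G : E} {μ L α : ℝ}
    (hcoer : μ * L * ‖d‖ ^ 2 + ‖G‖ ^ 2 ≤ (μ + L) * ⟪G, d⟫) (hα0 : 0 < α)
    (hα : α ≤ 2 / (μ + L)) :
    ‖d - α • G‖ ^ 2 ≤ (1 - 2 * α * (μ * L / (μ + L))) * ‖d‖ ^ 2 := by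
  have hμL : 0 < μ + L := by
    by_contra! h
    linarith [div_nonpos_of_nonneg_of_nonpos zero_le_two h]
  calc ‖d - α • G‖ ^ 2 = ‖d‖ ^ 2 - 2 * α * ⟪G, d⟫ + α * α * ‖G‖ ^ 2 := by
        rw [norm_sub_sq_real, inner_smul_right, norm_smul, Real.norm_of_nonneg hα0.le,
          real_inner_comm]
        ring
    _ ≤ ‖d‖ ^ 2 - 2 * α * ⟪G, d⟫ + α * (2 / (μ + L)) * ‖G‖ ^ 2 := by gcongr
    _ = ‖d‖ ^ 2 - 2 * α / (μ + L) * ((μ + L) * ⟪G, d⟫ - ‖G‖ ^ 2) := by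
        field_simp
        ring
    _ ≤ ‖d‖ ^ 2 - 2 * α / (μ + L) * (μ * L * ‖d‖ ^ 2) := by gcongr; linarith
    _ = (1 - 2 * α * (μ * L / (μ + L))) * ‖d‖ ^ 2 := by ring

variable [CompleteSpace E]

theorem integral_norm_sub_smul_sq {Ω : Type*} [MeasurableSpace Ω] {P : Measure Ω}
    [IsProbabilityMeasure P] {X : Ω → E} (hX : Integrable X P)
    (hX2 : Integrable (fun ω => ‖X ω‖ ^ 2) P) (x : E) (a : ℝ) :
    ∫ ω, ‖x - a • X ω‖ ^ 2 ∂P =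
      ‖x - a • ∫ ω, X ω ∂P‖ ^ 2 + a ^ 2 * ∫ ω, ‖X ω - ∫ ω, X ω ∂P‖ ^ 2 ∂P := by
  set m := ∫ ω, X ω ∂P
  have hY : Integrable (fun ω => X ω - m) P := hX.sub (integrable_const m)
  have hY0 : ∫ ω, (X ω - m) ∂P = 0 := by
    rw [integral_sub hX (integrable_const m), integral_const, probReal_univ, one_smul, sub_self]
  have hY2 : Integrable (fun ω => ‖X ω - m‖ ^ 2) P :=
    (memLp_two_iff_integrable_sq_norm hY.1).1
      (((memLp_two_iff_integrable_sq_norm hX.1).2 hX2).sub (memLp_const m))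
  have hsplit : ∀ ω, ‖x - a • X ω‖ ^ 2 =
      ‖x - a • m‖ ^ 2 - 2 * a * ⟪x - a • m, X ω - m⟫ + a ^ 2 * ‖X ω - m‖ ^ 2 := by
    intro ω
    rw [show x - a • X ω = (x - a • m) - a • (X ω - m) by rw [smul_sub]; abel,
      norm_sub_sq_real, inner_smul_right, norm_smul, Real.norm_eq_abs, mul_pow, sq_abs]
    ring
  simp_rw [hsplit]
  have hcross : Integrable (fun ω => 2 * a * ⟪x - a • m, X ω - m⟫) P :=
    (hY.const_inner _).const_mul _
  have hlinear : Integrable (fun ω => ‖x - a • m‖ ^ 2 - 2 * a * ⟪x - a • m, X ω - m⟫) P :=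
    (integrable_const _).sub hcross
  rw [integral_add hlinear (hY2.const_mul _),
    integral_sub (integrable_const _) hcross, integral_const_mul, integral_const_mul,
    integral_inner hY, hY0]
  simp

end InnerProductSpace

theorem average_iterate_one_step_general {p : ℕ} (μ L : ℝ)
    (fbar : EuclideanSpace ℝ (Fin p) → ℝ)
    (hsc : StronglyConvex μ fbar) (hsm : LSmooth L fbar)
    (xstar : EuclideanSpace ℝ (Fin p)) (hmin : ∀ x, fbar xstar ≤ fbar x)
    (α : ℝ) (hα0 : 0 < α) (hα : α ≤ 2 / (μ + L))
    (γ : ℝ) (hγ : γ = μ * L / (μ + L))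
    (ψ : ℝ) (hψ : 0 < ψ)
    (xbar : EuclideanSpace ℝ (Fin p)) (h : EuclideanSpace ℝ (Fin p))
    (hbar : EuclideanSpace ℝ (Fin p)) (hhbar : hbar = gradient fbar xbar)
    {Ω : Type*} [MeasureSpace Ω] [IsProbabilityMeasure (volume : Measure Ω)]
    (gbar : Ω → EuclideanSpace ℝ (Fin p))
    (hg_int : Integrable gbar) (hg_sq_int : Integrable (fun ω => ‖gbar ω‖ ^ 2))
    (hunbiased : (∫ ω, gbar ω) = h)
    (σ : ℝ) (n : ℕ)
    (hvar : (∫ ω, ‖gbar ω - h‖ ^ 2) ≤ σ ^ 2 / n) :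
    (∫ ω, ‖xbar - α • gbar ω - xstar‖ ^ 2) ≤
      (1 + ψ) * (1 - 2 * α * γ) * ‖xbar - xstar‖ ^ 2 +
        α ^ 2 * (1 + ψ⁻¹) * ‖hbar - h‖ ^ 2 + α ^ 2 * σ ^ 2 / n := by
  subst hhbar hγ
  have hgrad : ∀ z, HasGradientAt fbar (gradient fbar z) z := fun z => (hsm.1 z).hasGradientAt
  have hstar : gradient fbar xstar = 0 :=
    IsLocalMin.hasGradientAt_eq_zero (Filter.Eventually.of_forall hmin) (hgrad xstar)
  have hcoer := hsc.mul_mul_sq_add_sq_le_inner hgrad hsm.2 xbar xstar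
  rw [hstar, sub_zero] at hcoer
  have hcontract := norm_sub_smul_sq_le_of_mul_mul_sq_add_sq_le_inner hcoer hα0 hα
  have hyoung := norm_add_sq_le_one_add_mul_add_one_add_inv_mul hψ
    (xbar - xstar - α • gradient fbar xbar) (α • (gradient fbar xbar - h))
  rw [norm_smul, Real.norm_of_nonneg hα0.le, mul_pow,
    show xbar - xstar - α • gradient fbar xbar + α • (gradient fbar xbar - h) =
      xbar - xstar - α • h by rw [smul_sub]; abel] at hyoung
  calc ∫ ω, ‖xbar - α • gbar ω - xstar‖ ^ 2
      = ‖xbar - xstar - α • h‖ ^ 2 + α ^ 2 * ∫ ω, ‖gbar ω - h‖ ^ 2 := by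
        simp_rw [sub_right_comm xbar _ xstar]
        rw [integral_norm_sub_smul_sq hg_int hg_sq_int, hunbiased]
    _ ≤ (1 + ψ) * ((1 - 2 * α * (μ * L / (μ + L))) * ‖xbar - xstar‖ ^ 2) +
          (1 + ψ⁻¹) * (α ^ 2 * ‖gradient fbar xbar - h‖ ^ 2) + α ^ 2 * (σ ^ 2 / n) := by
        gcongr
        exact hyoung.trans (by gcongr)
    _ = _ := by ring

/-- One-step inequality for the average iterate of stochastic NEAR-DGD^t:
`𝔼‖x̄ − αḡ − x⋆‖² ≤ (1+ψ)(1−2αγ)‖x̄ − x⋆‖² + α²(1+ψ⁻¹)‖h̄ − h‖² + α²σ²/n`. -/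
theorem average_iterate_one_step {p : ℕ} (μ L : ℝ) (hμ : 0 < μ)
    (fbar : EuclideanSpace ℝ (Fin p) → ℝ)
    (hsc : StronglyConvex μ fbar) (hsm : LSmooth L fbar)
    (xstar : EuclideanSpace ℝ (Fin p)) (hmin : ∀ x, fbar xstar ≤ fbar x)
    (α : ℝ) (hα0 : 0 < α) (hα : α ≤ 2 / (μ + L))
    (γ : ℝ) (hγ : γ = μ * L / (μ + L))
    (ψ : ℝ) (hψ : 0 < ψ)
    (xbar : EuclideanSpace ℝ (Fin p)) (h : EuclideanSpace ℝ (Fin p))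
    (hbar : EuclideanSpace ℝ (Fin p)) (hhbar : hbar = gradient fbar xbar)
    {Ω : Type*} [MeasureSpace Ω] [IsProbabilityMeasure (volume : Measure Ω)]
    (gbar : Ω → EuclideanSpace ℝ (Fin p))
    (hg_int : Integrable gbar) (hg_sq_int : Integrable (fun ω => ‖gbar ω‖ ^ 2))
    (hunbiased : (∫ ω, gbar ω) = h)
    (σ : ℝ) (hσ : 0 < σ) (n : ℕ) (hn : 1 ≤ n)
    (hvar : (∫ ω, ‖gbar ω - h‖ ^ 2) ≤ σ ^ 2 / n) :
    (∫ ω, ‖xbar - α • gbar ω - xstar‖ ^ 2) ≤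
      (1 + ψ) * (1 - 2 * α * γ) * ‖xbar - xstar‖ ^ 2 +
        α ^ 2 * (1 + ψ⁻¹) * ‖hbar - h‖ ^ 2 + α ^ 2 * σ ^ 2 / n :=
  average_iterate_one_step_general μ L fbar hsc hsm xstar hmin α hα0 hα γ hγ ψ hψ xbar h hbar hhbar
    gbar hg_int hg_sq_int hunbiased σ n hvar
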